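/- For the partition C-eigendecomposition C = WΛW^T with W₁ spanning the active subspace (first n eigenvectors), the average squared norm of the projection of ∇f onto the inactive subspace satisfies ∫_X ‖W₂W₂^T ∇f‖² ρ dx = λ_{n+1} + ⋯ + λ_m; in particular, if λ_{n+1} = ⋯ = λ_m = 0 then W₂^T ∇f(x) = 0 for ρ-a.e. x. -/

import Mathlib

/-!
The columns `wₖ` of `W` are orthonormal, so `‖W₂W₂ᵀ∇f‖² = ∑_{k ≥ n} (wₖ ⬝ ∇f)²`, and
`∫ (wₖ ⬝ ∇f)² ρ = wₖᵀ C wₖ = (Wᵀ C W)ₖₖ = λₖ`; summing over the inactive indices gives the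
identity. If `λₖ = 0`, the nonnegative function `(wₖ ⬝ ∇f)² ρ` has zero integral, so
`wₖ ⬝ ∇f` vanishes wherever `ρ` does not, up to a null set, which is exactly the
`ρ dx`-a.e. statement; continuity of `∇f` makes the exceptional set measurable.
-/

open MeasureTheory Matrix

noncomputable def grad {m : ℕ} (f : (Fin m → ℝ) → ℝ) (x : Fin m → ℝ) : Fin m → ℝ :=
  fun i => fderiv ℝ f x (Pi.single i 1)

namespace Matrix

variable {ι κ R : Type*} [Fintype ι] [DecidableEq κ] [CommRing R]

theorem transpose_mul_mul_diagonal_mul_transpose_mul [Fintype κ] {W : Matrix ι κ R}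
    (hW : Wᵀ * W = 1) (d : κ → R) : Wᵀ * (W * diagonal d * Wᵀ) * W = diagonal d := by
  simp only [Matrix.mul_assoc, hW, Matrix.mul_one, ← Matrix.mul_assoc Wᵀ, Matrix.one_mul]

theorem sum_sq_sum_mul_of_transpose_mul_self_eq_one {W : Matrix ι κ R} (hW : Wᵀ * W = 1)
    (S : Finset κ) (c : κ → R) :
    ∑ i, (∑ k ∈ S, W i k * c k) ^ 2 = ∑ k ∈ S, c k ^ 2 := by
  have horth (k k' : κ) : ∑ i, W i k * W i k' = if k = k' then 1 else 0 := by
    simpa [mul_apply, one_apply] using congrFun (congrFun hW k) k'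
  have hexpand (i : ι) : (∑ k ∈ S, W i k * c k) ^ 2
      = ∑ k ∈ S, ∑ k' ∈ S, c k * c k' * (W i k * W i k') := by
    rw [sq, Finset.sum_mul_sum]
    exact Finset.sum_congr rfl fun k _ => Finset.sum_congr rfl fun k' _ => by ring
  calc ∑ i, (∑ k ∈ S, W i k * c k) ^ 2
      = ∑ k ∈ S, ∑ k' ∈ S, c k * c k' * ∑ i, W i k * W i k' := by
        simp only [hexpand, Finset.mul_sum]
        exact Finset.sum_comm.trans (Finset.sum_congr rfl fun k _ => Finset.sum_comm)
    _ = ∑ k ∈ S, c k ^ 2 := by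
        simp only [horth, mul_ite, mul_one, mul_zero, Finset.sum_ite_eq, sq]
        exact Finset.sum_congr rfl fun k hk => if_pos hk

end Matrix

section WeightedSecondMoment

variable {ι α : Type*} [Fintype ι] [MeasurableSpace α] {μ : Measure α}
  {g : α → ι → ℝ} {ρ : α → ℝ}

theorem sq_dotProduct_mul_eq_sum (u v : ι → ℝ) (r : ℝ) :
    (u ⬝ᵥ v) ^ 2 * r = ∑ i, ∑ j, u i * u j * (v i * v j * r) := by
  rw [dotProduct, sq, Finset.sum_mul_sum, Finset.sum_mul]
  refine Finset.sum_congr rfl fun i _ => ?_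
  rw [Finset.sum_mul]
  exact Finset.sum_congr rfl fun j _ => by ring

theorem integrable_sq_dotProduct_mul
    (hint : ∀ i j, Integrable (fun x => g x i * g x j * ρ x) μ) (u : ι → ℝ) :
    Integrable (fun x => (u ⬝ᵥ g x) ^ 2 * ρ x) μ := by
  simp only [sq_dotProduct_mul_eq_sum]
  exact integrable_finsetSum _ fun i _ =>
    integrable_finsetSum _ fun j _ => (hint i j).const_mul _

theorem integral_sq_dotProduct_mul
    (hint : ∀ i j, Integrable (fun x => g x i * g x j * ρ x) μ)
    {C : Matrix ι ι ℝ} (hC : ∀ i j, C i j = ∫ x, g x i * g x j * ρ x ∂μ) (u : ι → ℝ) :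
    ∫ x, (u ⬝ᵥ g x) ^ 2 * ρ x ∂μ = u ⬝ᵥ C *ᵥ u := by
  simp only [sq_dotProduct_mul_eq_sum]
  rw [integral_finsetSum _ fun i _ =>
    integrable_finsetSum _ fun j _ => (hint i j).const_mul _]
  simp only [dotProduct, mulVec, Finset.mul_sum, hC]
  refine Finset.sum_congr rfl fun i _ => ?_
  rw [integral_finsetSum _ fun j _ => (hint i j).const_mul _]
  refine Finset.sum_congr rfl fun j _ => ?_
  rw [integral_const_mul]
  ring

end WeightedSecondMoment

theorem ae_withDensity_eq_zero_of_integral_sq_mul_eq_zero {α : Type*} [MeasurableSpace α]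
    {μ : Measure α} {φ ρ : α → ℝ} (hφ : Measurable φ) (hρ : 0 ≤ᵐ[μ] ρ)
    (hint : Integrable (fun x => φ x ^ 2 * ρ x) μ) (h0 : ∫ x, φ x ^ 2 * ρ x ∂μ = 0) :
    ∀ᵐ x ∂μ.withDensity (fun x => ENNReal.ofReal (ρ x)), φ x = 0 := by
  have hnn : 0 ≤ᵐ[μ] fun x => φ x ^ 2 * ρ x :=
    hρ.mono fun x hx => mul_nonneg (sq_nonneg _) hx
  have hvanish : ∀ᵐ x ∂μ, x ∈ {x | φ x ≠ 0} → ENNReal.ofReal (ρ x) = 0 :=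
    ((integral_eq_zero_iff_of_nonneg_ae hnn hint).1 h0).mono fun x hx hφx =>
      ENNReal.ofReal_eq_zero.2 ((mul_eq_zero.1 hx).resolve_left (pow_ne_zero 2 hφx)).le
  have hs : MeasurableSet {x | φ x ≠ 0} := (hφ (measurableSet_singleton 0)).compl
  rw [ae_iff, withDensity_apply _ hs]
  exact (lintegral_congr_ae ((ae_restrict_iff' hs).2 hvanish)).trans lintegral_zero

theorem continuous_grad {m : ℕ} {f : (Fin m → ℝ) → ℝ} (hf : ContDiff ℝ 1 f) :
    Continuous (grad f) :=
  continuous_pi fun _ => (hf.continuous_fderiv one_ne_zero).clm_apply continuous_const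

theorem stmt17_general {m : ℕ} (n : ℕ)
    (X : Set (Fin m → ℝ)) (hX : IsCompact X)
    (ρ : (Fin m → ℝ) → ℝ) (hρ : ∀ x ∈ X, 0 ≤ ρ x)
    (f : (Fin m → ℝ) → ℝ) (hf : ContDiff ℝ 1 f)
    (hint : ∀ i j : Fin m,
      IntegrableOn (fun x => grad f x i * grad f x j * ρ x) X volume)
    (C : Matrix (Fin m) (Fin m) ℝ)
    (hC : ∀ i j, C i j = ∫ x in X, grad f x i * grad f x j * ρ x)
    (W : Matrix (Fin m) (Fin m) ℝ) (hW : Wᵀ * W = 1)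
    (Λ : Fin m → ℝ)
    (hdecomp : C = W * Matrix.diagonal Λ * Wᵀ) :
    (∫ x in X,
        (∑ i, (∑ k ∈ Finset.univ.filter (fun k : Fin m => n ≤ (k : ℕ)),
          W i k * (∑ j, W j k * grad f x j))^2) * ρ x
      = ∑ k ∈ Finset.univ.filter (fun k : Fin m => n ≤ (k : ℕ)), Λ k) ∧
    ((∀ k : Fin m, n ≤ (k : ℕ) → Λ k = 0) →
      ∀ᵐ x ∂((volume.restrict X).withDensity fun x => ENNReal.ofReal (ρ x)),
        ∀ k : Fin m, n ≤ (k : ℕ) → ∑ j, W j k * grad f x j = 0) := by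
  have hint_sq (k : Fin m) :
      Integrable (fun x => (Wᵀ k ⬝ᵥ grad f x) ^ 2 * ρ x) (volume.restrict X) :=
    integrable_sq_dotProduct_mul hint (Wᵀ k)
  have heigenvalue (k : Fin m) : ∫ x in X, (Wᵀ k ⬝ᵥ grad f x) ^ 2 * ρ x = Λ k := by
    rw [integral_sq_dotProduct_mul hint hC, ← mul_mul_apply, hdecomp,
      transpose_mul_mul_diagonal_mul_transpose_mul hW, diagonal_apply_eq]
  refine ⟨?_, fun hΛ => ae_all_iff.2 fun k => Filter.eventually_imp_distrib_left.2 fun hk => ?_⟩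
  · simp_rw [sum_sq_sum_mul_of_transpose_mul_self_eq_one hW, Finset.sum_mul]
    exact (integral_finsetSum _ fun k _ => hint_sq k).trans
      (Finset.sum_congr rfl fun k _ => heigenvalue k)
  · have hρ_nonneg : 0 ≤ᵐ[volume.restrict X] ρ :=
      (ae_restrict_iff' hX.measurableSet).2 (.of_forall hρ)
    exact ae_withDensity_eq_zero_of_integral_sq_mul_eq_zero
      ((continuous_const.dotProduct (continuous_grad hf)).measurable) hρ_nonneg (hint_sq k)
      ((heigenvalue k).trans (hΛ k hk))

/-- with `C = WΛWᵀ` and `W₂` the last `m−n` eigenvectors, the average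
squared norm of the projection of `∇f` onto the inactive subspace equals
`λ_{n+1} + ⋯ + λ_m`; if those eigenvalues vanish then `W₂ᵀ ∇f = 0` for `ρ`-a.e. `x`. -/
theorem stmt17 {m : ℕ} (n : ℕ) (hn : n ≤ m)
    (X : Set (Fin m → ℝ)) (hX : IsCompact X)
    (ρ : (Fin m → ℝ) → ℝ) (hρ : ∀ x ∈ X, 0 ≤ ρ x) (hρ1 : ∫ x in X, ρ x = 1)
    (f : (Fin m → ℝ) → ℝ) (hf : ContDiff ℝ 1 f)
    (hint : ∀ i j : Fin m,
      IntegrableOn (fun x => grad f x i * grad f x j * ρ x) X volume)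
    (C : Matrix (Fin m) (Fin m) ℝ)
    (hC : ∀ i j, C i j = ∫ x in X, grad f x i * grad f x j * ρ x)
    (W : Matrix (Fin m) (Fin m) ℝ) (hW : Wᵀ * W = 1)
    (Λ : Fin m → ℝ) (hord : Antitone Λ)
    (hdecomp : C = W * Matrix.diagonal Λ * Wᵀ) :
    (∫ x in X,
        (∑ i, (∑ k ∈ Finset.univ.filter (fun k : Fin m => n ≤ (k : ℕ)),
          W i k * (∑ j, W j k * grad f x j))^2) * ρ x
      = ∑ k ∈ Finset.univ.filter (fun k : Fin m => n ≤ (k : ℕ)), Λ k) ∧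
    ((∀ k : Fin m, n ≤ (k : ℕ) → Λ k = 0) →
      ∀ᵐ x ∂((volume.restrict X).withDensity fun x => ENNReal.ofReal (ρ x)),
        ∀ k : Fin m, n ≤ (k : ℕ) → ∑ j, W j k * grad f x j = 0) :=
  stmt17_general n X hX ρ hρ f hf hint C hC W hW Λ hdecomp
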